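/- Under the event V of the CMR score-density lower bound proposition (with β = min{α, 1−α}/(2 f_max), ε_n < β/4, so f_{S|θ̌_n}(s) ≥ 2 f_min for all s with |s − ζ| ≤ β − ε_n and |q_{1−α}(S|θ̌_n) − ζ| ≤ ε_n): for any u ∈ [0, β/4], if sup_s |F_{S|θ̌_n}(s) − F̂^{(m)}_{S|θ̌_n}(s)| ≤ 2 f_min u, then |q̂_{(1−α)_m}(S_m | θ̌_n) − q_{(1−α)_m}(S | θ̌_n)| ≤ u. -/

import Mathlib

open MeasureTheory ProbabilityTheory Real Filter Set
open scoped RealInnerProductSpace ENNReal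

noncomputable section

/-- The lower `p`-quantile of a cdf-like function `F`: `inf {u | F u ≥ p}`. -/
def quantileOf (F : ℝ → ℝ) (p : ℝ) : ℝ := sInf {u : ℝ | p ≤ F u}

/-- The calibration quantile level `(1-α)_m = ⌈(1-α)(m+1)⌉ / m`. -/
def calLevel (α : ℝ) (m : ℕ) : ℝ := (⌈(1 - α) * ((m : ℝ) + 1)⌉₊ : ℝ) / (m : ℝ)

/-- The empirical cdf of `m` scores. -/
def empCDF {m : ℕ} (s : Fin m → ℝ) (t : ℝ) : ℝ :=
  (∑ j, if s j ≤ t then (1 : ℝ) else 0) / (m : ℝ)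

/-- The empirical `p`-quantile: the smallest of the scores at which the empirical cdf
reaches level `p` (for `p = (1-α)_m` this is the `⌈(1-α)(m+1)⌉`-th smallest score). -/
def empQuantile {m : ℕ} (s : Fin m → ℝ) (p : ℝ) : ℝ :=
  sInf {t : ℝ | t ∈ Set.range s ∧ p ≤ empCDF s t}

/-- `β = min{α, 1-α} / (2 fmax)`. -/
def betaConst (α fmax : ℝ) : ℝ := min α (1 - α) / (2 * fmax)

/-- `A = 4 λmax² fmax d / (λmin⁴ fmin²)`. -/
def Aconst (lmin lmax fmin fmax : ℝ) (d : ℕ) : ℝ :=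
  4 * lmax ^ 2 * fmax * (d : ℝ) / (lmin ^ 4 * fmin ^ 2)

set_option maxHeartbeats 1000000 in
/-- **Empirical quantile stability under the good event, CMR version** (Lemma C.5):
let the CMR score have cdf `FS` with density `fS` and let `F̂` be the empirical cdf of
`m` calibration scores. Under the event `V` (`fS(s) ≥ 2 fmin` for all `|s - ζ| ≤ β - ε_n`
and `|q_{1-α} - ζ| ≤ ε_n < β/4`, where `β = min{α,1-α}/(2 fmax)` and `ζ > 0`), and
assuming `|q_{(1-α)_m} - ζ| < β/2` (as guaranteed by the CMR quantile-gap proposition),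
for any `u ∈ [0, β/4]`: if `sup_s |FS(s) - F̂(s)| ≤ 2 fmin u`, then
`|q̂_{(1-α)_m} - q_{(1-α)_m}| ≤ u`. -/
theorem cmr_empirical_score_quantile_stability
    (FS fS : ℝ → ℝ)
    (hfS0 : ∀ s : ℝ, 0 ≤ fS s)
    (hfSint : ∀ u : ℝ, IntegrableOn fS (Iic u))
    (hFSfS : ∀ u : ℝ, FS u = ∫ s in Iic u, fS s)
    (hFS0 : Tendsto FS atBot (nhds 0)) (hFS1 : Tendsto FS atTop (nhds 1))
    (α fmin fmax : ℝ) (hα : α ∈ Ioo (0 : ℝ) 1)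
    (hfmin : 0 < fmin) (hfminmax : fmin ≤ fmax)
    (ζ : ℝ) (hζ : 0 < ζ)
    (εn : ℝ) (hεβ : εn < betaConst α fmax / 4)
    (hV1 : ∀ s : ℝ, |s - ζ| ≤ betaConst α fmax - εn → 2 * fmin ≤ fS s)
    (hV2 : |quantileOf FS (1 - α) - ζ| ≤ εn)
    (m : ℕ) (s : Fin m → ℝ)
    (hqm : |quantileOf FS (calLevel α m) - ζ| < betaConst α fmax / 2) :
    ∀ u ∈ Icc (0 : ℝ) (betaConst α fmax / 4),
      (∀ t : ℝ, |FS t - empCDF s t| ≤ 2 * fmin * u) →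
      |empQuantile s (calLevel α m) - quantileOf FS (calLevel α m)| ≤ u := by
  classical
  intro u hu hH
  obtain ⟨hu0, huβ⟩ := hu
  set β := betaConst α fmax with hβdef
  have hfmax : 0 < fmax := lt_of_lt_of_le hfmin hfminmax
  have hmin0 : 0 < min α (1 - α) := lt_min hα.1 (by linarith [hα.2])
  have hβpos : 0 < β := div_pos hmin0 (by linarith)
  -- basic facts about FS
  have hFSnn : ∀ t : ℝ, 0 ≤ FS t := by
    intro t
    rw [hFSfS t]
    exact setIntegral_nonneg measurableSet_Iic fun x _ => hfS0 x
  have hsub : ∀ a b : ℝ, FS b - FS a = ∫ x in a..b, fS x := by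
    intro a b
    rw [hFSfS a, hFSfS b]
    exact intervalIntegral.integral_Iic_sub_Iic (hfSint a) (hfSint b)
  have hII : ∀ a b : ℝ, IntervalIntegrable fS volume a b := fun a b =>
    ⟨(hfSint b).mono_set Ioc_subset_Iic_self, (hfSint a).mono_set Ioc_subset_Iic_self⟩
  have hcont : Continuous FS := by
    have hprim : Continuous fun b => ∫ x in (0:ℝ)..b, fS x :=
      intervalIntegral.continuous_primitive hII 0
    have hEq : FS = fun b => FS 0 + ∫ x in (0:ℝ)..b, fS x := by
      funext b
      have := hsub 0 b
      linarith
    rw [hEq]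
    exact continuous_const.add hprim
  have hmonoFS : ∀ a b : ℝ, a ≤ b → FS a ≤ FS b := by
    intro a b hab
    have h1 := hsub a b
    have h2 : 0 ≤ ∫ x in a..b, fS x := by
      rw [intervalIntegral.integral_of_le hab]
      exact setIntegral_nonneg measurableSet_Ioc fun x _ => hfS0 x
    linarith
  have hgrow : ∀ a b : ℝ, a ≤ b → (∀ x ∈ Icc a b, 2 * fmin ≤ fS x) →
      FS a + 2 * fmin * (b - a) ≤ FS b := by
    intro a b hab hbd
    have h1 : FS b - FS a = ∫ x in Ioc a b, fS x := by
      rw [hsub a b, intervalIntegral.integral_of_le hab]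
    have hconst : ∫ _x in Ioc a b, (2 * fmin : ℝ) = 2 * fmin * (b - a) := by
      rw [setIntegral_const, measureReal_def, Real.volume_Ioc, smul_eq_mul,
        ENNReal.toReal_ofReal (by linarith : (0:ℝ) ≤ b - a)]
      ring
    have h2 : ∫ _x in Ioc a b, (2 * fmin : ℝ) ≤ ∫ x in Ioc a b, fS x := by
      apply setIntegral_mono_on
      · exact integrableOn_const measure_Ioc_lt_top.ne
      · exact (hfSint b).mono_set Ioc_subset_Iic_self
      · exact measurableSet_Ioc
      · intro x hx
        exact hbd x (Ioc_subset_Icc_self hx)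
    rw [hconst] at h2
    linarith
  have hleftle : ∀ x B : ℝ, (∀ t, t < x → FS t ≤ B) → FS x ≤ B := by
    intro x B hB
    have h1 : Tendsto FS (nhdsWithin x (Iio x)) (nhds (FS x)) :=
      (hcont.tendsto x).mono_left nhdsWithin_le_nhds
    exact le_of_tendsto h1 (eventually_nhdsWithin_of_forall fun t ht => hB t ht)
  -- the density lower bound on the relevant interval
  have hIcc : ∀ x : ℝ, |x - ζ| ≤ 3 * β / 4 → 2 * fmin ≤ fS x := by
    intro x hx
    exact hV1 x (le_trans hx (by linarith))
  set p := calLevel α m with hpdef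
  set E := {t : ℝ | t ∈ Set.range s ∧ p ≤ empCDF s t} with hEdef
  have hgoal : empQuantile s (calLevel α m) = sInf E := rfl
  set q := quantileOf FS p with hqdef
  rw [hgoal]
  rcases Nat.eq_zero_or_pos m with hm | hm
  · -- m = 0 : everything degenerates to 0
    subst hm
    have hp0 : p = 0 := by
      simp [hpdef, calLevel]
    have hE : E = (∅ : Set ℝ) := by
      rw [hEdef]
      ext t
      simp [Set.range_eq_empty s]
    have hq0 : q = 0 := by
      rw [hqdef, quantileOf, hp0]
      have : {u : ℝ | (0:ℝ) ≤ FS u} = Set.univ := by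
        ext t; simp [hFSnn t]
      rw [this]
      exact Real.sInf_of_not_bddBelow fun h => not_bddBelow_univ (α := ℝ) h
    rw [hE, hq0, Real.sInf_empty]
    simpa using hu0
  -- now m ≥ 1
  have hmR : (0:ℝ) < (m:ℝ) := by exact_mod_cast hm
  have hp_pos : 0 < p := by
    have h1 : (0:ℝ) < (1 - α) * ((m:ℝ) + 1) := by
      have hα2 : (0:ℝ) < 1 - α := by linarith [hα.2]
      positivity
    have h2 : 0 < ⌈(1 - α) * ((m:ℝ) + 1)⌉₊ := Nat.ceil_pos.2 h1
    have h3 : (0:ℝ) < (⌈(1 - α) * ((m:ℝ) + 1)⌉₊ : ℝ) := by exact_mod_cast h2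
    exact div_pos h3 hmR
  -- empirical cdf facts
  have hempmono : ∀ t t' : ℝ, t ≤ t' → empCDF s t ≤ empCDF s t' := by
    intro t t' h
    unfold empCDF
    apply div_le_div_of_nonneg_right ?_ hmR.le
    apply Finset.sum_le_sum
    intro j _
    by_cases hjt : s j ≤ t
    · simp [hjt, hjt.trans h]
    · simp only [hjt, if_false]
      positivity
  have hexists : ∀ t : ℝ, 0 < empCDF s t → ∃ j, s j ≤ t := by
    intro t h
    by_contra hc
    push_neg at hc
    have hz : empCDF s t = 0 := by
      unfold empCDF
      rw [Finset.sum_eq_zero, zero_div]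
      intro j _
      simp [not_le.2 (hc j)]
    rw [hz] at h
    exact lt_irrefl 0 h
  have hwitness : ∀ t : ℝ, (∃ j, s j ≤ t) → p ≤ empCDF s t → ∃ t' ∈ E, t' ≤ t := by
    intro t ht hpt
    obtain ⟨j, hj⟩ := ht
    set T := Finset.univ.filter (fun j => s j ≤ t) with hT
    have hTne : T.Nonempty := ⟨j, by simp [hT, hj]⟩
    obtain ⟨j'', hj''T, hj''⟩ := Finset.exists_mem_eq_sup' hTne s
    have hj''t : s j'' ≤ t := by
      have := hj''T
      simp only [hT, Finset.mem_filter, Finset.mem_univ, true_and] at this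
      exact this
    have hcdfeq : empCDF s (s j'') = empCDF s t := by
      unfold empCDF
      congr 1
      apply Finset.sum_congr rfl
      intro k _
      have hiff : s k ≤ s j'' ↔ s k ≤ t := by
        constructor
        · intro h; exact h.trans hj''t
        · intro h
          have hk : k ∈ T := by simp [hT, h]
          have := Finset.le_sup' s hk
          rw [hj''] at this
          exact this
      exact if_congr hiff rfl rfl
    exact ⟨s j'', ⟨⟨j'', rfl⟩, by rw [hcdfeq]; exact hpt⟩, hj''t⟩
  have hjump : ∀ (j₀ : Fin m) (t : ℝ), t < s j₀ →
      empCDF s t ≤ empCDF s (s j₀) - 1 / (m:ℝ) := by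
    intro j₀ t ht
    have hnum : (∑ j, if s j ≤ t then (1:ℝ) else 0) + 1 ≤
        ∑ j, if s j ≤ s j₀ then (1:ℝ) else 0 := by
      rw [← Finset.sum_erase_add Finset.univ (fun j => if s j ≤ t then (1:ℝ) else 0)
        (Finset.mem_univ j₀),
        ← Finset.sum_erase_add Finset.univ (fun j => if s j ≤ s j₀ then (1:ℝ) else 0)
        (Finset.mem_univ j₀)]
      have h1 : (if s j₀ ≤ t then (1:ℝ) else 0) = 0 := by simp [not_le.2 ht]
      have h2 : (if s j₀ ≤ s j₀ then (1:ℝ) else 0) = 1 := by simp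
      rw [h1, h2, add_zero]
      refine add_le_add ?_ le_rfl
      apply Finset.sum_le_sum
      intro k _
      by_cases hk : s k ≤ t
      · simp [hk, hk.trans ht.le]
      · simp only [hk, if_false]
        positivity
    unfold empCDF
    rw [div_sub_div_same]
    exact div_le_div_of_nonneg_right (by linarith) hmR.le
  -- the set E is finite
  have hEfin : E.Finite := (Set.finite_range s).subset fun t ht => ht.1
  have hEbdd : BddBelow E := hEfin.bddBelow
  set SF := {t : ℝ | p ≤ FS t} with hSF
  have hqSF : q = sInf SF := rfl
  rcases Set.eq_empty_or_nonempty SF with hSFe | hSFne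
  · -- degenerate case: FS never reaches level p
    have h_all : ∀ t : ℝ, FS t < p := by
      intro t
      by_contra h
      push_neg at h
      rw [Set.eq_empty_iff_forall_notMem] at hSFe
      exact hSFe t h
    have hq0 : q = 0 := by
      rw [hqSF, hSFe, Real.sInf_empty]
    have hp1 : 1 ≤ p := le_of_tendsto hFS1 (Eventually.of_forall fun t => (h_all t).le)
    -- hence ⌈(1-α)(m+1)⌉ ≥ m, so α(m+1) < 2
    have hceil : m ≤ ⌈(1 - α) * ((m:ℝ) + 1)⌉₊ := by
      have h1 : (m:ℝ) ≤ (⌈(1 - α) * ((m:ℝ) + 1)⌉₊ : ℝ) := by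
        have := hp1
        rw [hpdef, calLevel, le_div_iff₀ hmR] at this
        linarith
      exact_mod_cast h1
    have hlt : ((m - 1 : ℕ) : ℝ) < (1 - α) * ((m:ℝ) + 1) := by
      apply Nat.lt_ceil.1
      exact lt_of_lt_of_le (Nat.sub_lt hm one_pos) hceil
    have hcast : ((m - 1 : ℕ) : ℝ) = (m:ℝ) - 1 := by
      have : (1:ℕ) ≤ m := hm
      push_cast [Nat.cast_sub this]
      ring
    have hαm2 : α * ((m:ℝ) + 1) < 2 := by
      rw [hcast] at hlt
      nlinarith
    rcases Set.eq_empty_or_nonempty E with hEe | hEne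
    · rw [hEe, hq0, Real.sInf_empty]
      simpa using hu0
    · -- E nonempty leads to a contradiction
      exfalso
      have hqhatmem : sInf E ∈ E := hEne.csInf_mem hEfin
      obtain ⟨⟨j₀, hj₀⟩, hphat⟩ := hqhatmem
      -- FS jumps by at least 1/m - 2c at s j₀, contradicting continuity
      have hFSup : ∀ t : ℝ, t < s j₀ → FS t ≤ empCDF s (s j₀) - 1 / (m:ℝ) + 2 * fmin * u := by
        intro t ht
        have h1 := hjump j₀ t ht
        have h2 := (abs_le.1 (hH t)).2
        linarith
      have h3 : FS (s j₀) ≤ empCDF s (s j₀) - 1 / (m:ℝ) + 2 * fmin * u :=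
        hleftle _ _ hFSup
      have h4 : empCDF s (s j₀) - 2 * fmin * u ≤ FS (s j₀) := by
        have := (abs_le.1 (hH (s j₀))).1
        linarith
      have h5 : 1 / (m:ℝ) ≤ 4 * fmin * u := by linarith
      -- but 4 fmin u ≤ fmin β ≤ α/2
      have h6 : fmin * β ≤ α / 2 := by
        rw [hβdef, betaConst, mul_div_assoc', div_le_div_iff₀ (by linarith) (by norm_num)]
        nlinarith [min_le_left α (1 - α), hmin0]
      have h7 : (1:ℝ) / (m:ℝ) ≤ α / 2 := by nlinarith
      have h8 : (2:ℝ) ≤ α * (m:ℝ) := by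
        rw [div_le_div_iff₀ hmR (by norm_num : (0:ℝ) < 2)] at h7
        linarith
      linarith [hα.1]
  -- main case: SF is nonempty
  have hSFbdd : BddBelow SF := by
    have hev : ∀ᶠ t in atBot, FS t < p := hFS0.eventually (Iio_mem_nhds hp_pos)
    obtain ⟨T, hT⟩ := eventually_atBot.1 hev
    refine ⟨T, fun t ht => ?_⟩
    by_contra hc
    push_neg at hc
    exact absurd ht.out (not_le.2 (hT t hc.le))
  have hSFclosed : IsClosed SF := isClosed_le continuous_const hcont
  have hqmem : p ≤ FS q := (hSFclosed.csInf_mem hSFne hSFbdd).out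
  have hqlt : ∀ t : ℝ, t < q → FS t < p := by
    intro t ht
    by_contra h
    push_neg at h
    exact absurd (csInf_le hSFbdd h) (not_le.2 ht)
  have hqeq : FS q = p :=
    le_antisymm (hleftle q p fun t ht => (hqlt t ht).le) hqmem
  have hqζ : |q - ζ| < β / 2 := hqm
  obtain ⟨hqζ1, hqζ2⟩ := abs_lt.1 hqζ
  -- upper bound: sInf E ≤ q + u
  have hFSqu : p + 2 * fmin * u ≤ FS (q + u) := by
    have := hgrow q (q + u) (by linarith) (fun x hx => hIcc x (by
      rw [abs_le]
      constructor <;> [skip; skip] <;>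
        · obtain ⟨hx1, hx2⟩ := hx
          linarith))
    rw [hqeq] at this
    linarith
  have hFhatqu : p ≤ empCDF s (q + u) := by
    have := (abs_le.1 (hH (q + u))).2
    linarith
  have hEle : ∃ t' ∈ E, t' ≤ q + u := by
    apply hwitness _ _ hFhatqu
    apply hexists
    linarith
  obtain ⟨t', ht'E, ht'le⟩ := hEle
  have hEne : E.Nonempty := ⟨t', ht'E⟩
  have hupper : sInf E ≤ q + u := le_trans (csInf_le hEbdd ht'E) ht'le
  -- lower bound: q - u ≤ sInf E
  have hlower : q - u ≤ sInf E := by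
    apply le_csInf hEne
    intro t htE
    by_contra hc
    push_neg at hc
    -- t < q - u : show empCDF s t < p, contradiction
    set t'' := max t (ζ - 3 * β / 4) with ht''
    have ht''lt : t'' < q - u := by
      apply max_lt hc
      linarith
    have ht''ge : ζ - 3 * β / 4 ≤ t'' := le_max_right _ _
    have hgr := hgrow t'' q (by linarith) (fun x hx => hIcc x (by
      rw [abs_le]
      obtain ⟨hx1, hx2⟩ := hx
      constructor <;> linarith))
    rw [hqeq] at hgr
    have hFSt'' : FS t'' < p - 2 * fmin * u := by nlinarith
    have hFSt : FS t ≤ FS t'' := hmonoFS t t'' (le_max_left _ _)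
    have hcdf : empCDF s t ≤ FS t + 2 * fmin * u := by
      have := (abs_le.1 (hH t)).1
      linarith
    have : empCDF s t < p := by linarith
    exact absurd htE.2 (not_le.2 this)
  rw [abs_le]
  constructor <;> linarith
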